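/- For every finite nonempty set Y ⊆ V, every finite set P ⊆ V, and every integer k ≥ 1, the approximate potential penalty is at most the exact potential penalty: g'(Y,P,k) ≤ g(Y,P,k). -/

import Mathlib

open scoped Classical

/-- Pair-wise penalty `f⟨v,t⟩`: `dist(v,t) = depth t - depth v` if `v → t`,
and `dist(r,t) = depth t` otherwise. -/
noncomputable def fpair {V : Type*} (R : V → V → Prop) (depth : V → ℕ) (v t : V) : ℕ :=
  if R v t then depth t - depth v else depth t

/-- Set penalty `f(S,t) = min_{v ∈ S ∪ {r}} f⟨v,t⟩`. -/
noncomputable def fsel {V : Type*} (R : V → V → Prop) (depth : V → ℕ) (r : V)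
    (S : Finset V) (t : V) : ℕ :=
  (insert r S).inf' (Finset.insert_nonempty r S) fun v => fpair R depth v t

/-- Set-wise penalty `f(S,P) = Σ_{t ∈ P} f(S,t)`. -/
noncomputable def fsum {V : Type*} (R : V → V → Prop) (depth : V → ℕ) (r : V)
    (S : Finset V) (P : Finset V) : ℕ :=
  ∑ t ∈ P, fsel R depth r S t

/-- Potential penalty `g(Y,P,k) = min { f(S,P) : S ⊆ Y, S nonempty, |S| ≤ k }`. -/
noncomputable def gpen {V : Type*} (R : V → V → Prop) (depth : V → ℕ) (r : V)
    (Y P : Finset V) (k : ℕ) : ℕ :=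
  sInf {n : ℕ | ∃ S : Finset V, S ⊆ Y ∧ S.Nonempty ∧ S.card ≤ k ∧ n = fsum R depth r S P}

/-- Selected gain `IG(x) = |P ∩ des(x)| · dist(r,x)` (with `dist(r,x) = depth x`). -/
noncomputable def selGain {V : Type*} (R : V → V → Prop) (depth : V → ℕ)
    (P : Finset V) (x : V) : ℕ :=
  (P.filter fun t => R x t).card * depth x

/-- Approximate potential penalty
`g'(Y,P,k) = f({r},P) − max { Σ_{x ∈ S} IG(x) : S ⊆ Y, S nonempty, |S| ≤ k }`
(as an integer, since the subtraction may be negative). -/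
noncomputable def gapprox {V : Type*} (R : V → V → Prop) (depth : V → ℕ) (r : V)
    (Y P : Finset V) (k : ℕ) : ℤ :=
  (fsum R depth r {r} P : ℤ) -
    sSup {m : ℤ | ∃ S : Finset V, S ⊆ Y ∧ S.Nonempty ∧ S.card ≤ k ∧
      m = ∑ x ∈ S, (selGain R depth P x : ℤ)}

/-!
Choosing the root is never better than choosing a vertex `v` together with its gain:
`f⟨r,t⟩ ≤ depth t ≤ f⟨v,t⟩ + [v → t] · depth v`, the second step because
`(a - b) + b ≥ a` in `ℕ`. Summing over `t ∈ P` and bounding each `[v → t] · depth v` by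
the sum over `S` gives `f({r},P) ≤ f(S,P) + Σ_{x ∈ S} IG(x)` for every `S`. Applied to a
minimiser `S` of `g(Y,P,k)`, whose total gain is at most the maximum in `g'`, this is the
claim.
-/

section Penalty

variable {V : Type*} (R : V → V → Prop) (depth : V → ℕ)

theorem fpair_le_depth (v t : V) : fpair R depth v t ≤ depth t := by
  unfold fpair
  split_ifs <;> simp

theorem depth_le_fpair_add (v t : V) :
    depth t ≤ fpair R depth v t + if R v t then depth v else 0 := by
  unfold fpair
  split_ifs <;> simp [le_tsub_add]

theorem fpair_le_fpair_add (u v t : V) :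
    fpair R depth u t ≤ fpair R depth v t + if R v t then depth v else 0 :=
  (fpair_le_depth R depth u t).trans (depth_le_fpair_add R depth v t)

theorem fsel_singleton (r t : V) : fsel R depth r {r} t = fpair R depth r t := by
  simp [fsel]

theorem fsel_singleton_le_fsel_add (r : V) (S : Finset V) (t : V) :
    fsel R depth r {r} t ≤ fsel R depth r S t + ∑ x ∈ S, if R x t then depth x else 0 := by
  rw [fsel_singleton, ← tsub_le_iff_right]
  refine Finset.le_inf' _ _ fun v hv => tsub_le_iff_right.mpr ?_
  rcases Finset.mem_insert.mp hv with rfl | hvS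
  · exact le_self_add
  · calc fpair R depth r t ≤ fpair R depth v t + if R v t then depth v else 0 :=
          fpair_le_fpair_add R depth r v t
      _ ≤ fpair R depth v t + ∑ x ∈ S, if R x t then depth x else 0 := by
          gcongr
          exact Finset.single_le_sum (f := fun x => if R x t then depth x else 0)
            (fun _ _ => Nat.zero_le _) hvS

theorem selGain_eq_sum (P : Finset V) (x : V) :
    selGain R depth P x = ∑ t ∈ P, if R x t then depth x else 0 := by
  rw [selGain, ← Finset.sum_filter, Finset.sum_const, smul_eq_mul]

theorem fsum_singleton_le_fsum_add (r : V) (S P : Finset V) :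
    fsum R depth r {r} P ≤ fsum R depth r S P + ∑ x ∈ S, selGain R depth P x := by
  simp only [fsum, selGain_eq_sum]
  rw [Finset.sum_comm, ← Finset.sum_add_distrib]
  exact Finset.sum_le_sum fun t _ => fsel_singleton_le_fsel_add R depth r S t

theorem exists_gpen_eq (r : V) {Y : Finset V} (P : Finset V) (hY : Y.Nonempty) {k : ℕ}
    (hk : 1 ≤ k) :
    ∃ S ⊆ Y, S.Nonempty ∧ S.card ≤ k ∧ gpen R depth r Y P k = fsum R depth r S P := by
  obtain ⟨y, hy⟩ := hY
  exact Nat.sInf_mem (s := {n | ∃ S ⊆ Y, S.Nonempty ∧ S.card ≤ k ∧ n = fsum R depth r S P})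
    ⟨_, {y}, Finset.singleton_subset_iff.mpr hy, Finset.singleton_nonempty y,
    by simpa using hk, rfl⟩

theorem gapprox_le_fsum (r : V) {Y S : Finset V} (P : Finset V) {k : ℕ} (hSY : S ⊆ Y)
    (hS : S.Nonempty) (hSk : S.card ≤ k) :
    gapprox R depth r Y P k ≤ fsum R depth r S P := by
  have hbdd : BddAbove {m : ℤ | ∃ T : Finset V, T ⊆ Y ∧ T.Nonempty ∧ T.card ≤ k ∧
      m = ∑ x ∈ T, (selGain R depth P x : ℤ)} := by
    refine ⟨∑ x ∈ Y, (selGain R depth P x : ℤ), ?_⟩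
    rintro m ⟨T, hTY, -, -, rfl⟩
    exact Finset.sum_le_sum_of_subset_of_nonneg hTY fun _ _ _ => by positivity
  have hgain := le_csSup hbdd ⟨S, hSY, hS, hSk, rfl⟩
  have hroot : (fsum R depth r {r} P : ℤ) ≤ fsum R depth r S P + ∑ x ∈ S, selGain R depth P x :=
    mod_cast fsum_singleton_le_fsum_add R depth r S P
  rw [gapprox]
  push_cast at hroot
  linarith

end Penalty

theorem stmt13_general {V : Type*} (R : V → V → Prop) (r : V) (depth : V → ℕ)
    (Y P : Finset V) (hY : Y.Nonempty) (k : ℕ) (hk : 1 ≤ k) :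
    gapprox R depth r Y P k ≤ (gpen R depth r Y P k : ℤ) := by
  obtain ⟨S, hSY, hS, hSk, hg⟩ := exists_gpen_eq R depth r P hY hk
  rw [hg]
  exact gapprox_le_fsum R depth r P hSY hS hSk

/-- for every finite nonempty `Y ⊆ V`, finite `P ⊆ V`, and `k ≥ 1`,
the approximate potential penalty is at most the exact one: `g'(Y,P,k) ≤ g(Y,P,k)`. -/
theorem stmt13 {V : Type*} [Fintype V] (R : V → V → Prop) (r : V) (depth : V → ℕ)
    (hrefl : ∀ v, R v v)
    (htrans : ∀ u v w, R u v → R v w → R u w)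
    (hanti : ∀ u v, R u v → R v u → u = v)
    (hroot : ∀ v, R r v)
    (hchain : ∀ u v w, R u v → R w v → R u w ∨ R w u)
    (hdepth_root : depth r = 0)
    (hdepth_mono : ∀ u v, R u v → depth u ≤ depth v)
    (hdepth_eq : ∀ u v, R u v → (depth u = depth v ↔ u = v))
    (Y P : Finset V) (hY : Y.Nonempty) (k : ℕ) (hk : 1 ≤ k) :
    gapprox R depth r Y P k ≤ (gpen R depth r Y P k : ℤ) :=
  stmt13_general R r depth Y P hY k hk
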